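/- arXiv:1509.02583 — 5 statements merged into one kernel-verified Lean document; each statement's English description precedes it below -/
import Mathlib

section
/- Let a, b > 0, let B be a Beta(a,b) random variable and E an independent standard exponential random variable, and let p > 0. Then P(1 − B < E/(pw)) ∼ (Γ(b)/B(a,b)) · (pw)^{-b} as w → ∞. -/
open MeasureTheory Filter Real Asymptotics

/-- The Beta(a,b) distribution on ℝ, via its density. -/
noncomputable def betaM (a b : ℝ) : Measure ℝ :=
  volume.withDensity fun x => ENNReal.ofReal
    (if 0 < x ∧ x < 1 then
      x ^ (a - 1) * (1 - x) ^ (b - 1) * (Real.Gamma (a + b) / (Real.Gamma a * Real.Gamma b))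
    else 0)

/-- The generalized gamma GG(c,p) distribution on ℝ, via its density. -/
noncomputable def genGammaM (c p : ℝ) : Measure ℝ :=
  volume.withDensity fun x => ENNReal.ofReal
    (if 0 < x then p / Real.Gamma (c / p) * x ^ (c - 1) * Real.exp (-(x ^ p)) else 0)

/-- The Gamma(r,1) distribution on ℝ, via its density. -/
noncomputable def gammaM (r : ℝ) : Measure ℝ :=
  volume.withDensity fun x => ENNReal.ofReal
    (if 0 < x then x ^ (r - 1) * Real.exp (-x) / Real.Gamma r else 0)

/-- The standard exponential distribution on ℝ, via its density. -/
noncomputable def expM : Measure ℝ :=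
  volume.withDensity fun x => ENNReal.ofReal (if 0 < x then Real.exp (-x) else 0)

/-! Since `E` is standard exponential, `P(1 - B < E / s) = E[exp (-s (1 - B))]`, which after
`u = 1 - x` is `Γ(a+b)/(Γ(a)Γ(b)) · ∫₀¹ (1 - u)^(a-1) u^(b-1) e^(-s u) du`. By Watson's lemma this
Laplace transform is `~ Γ(b) s^(-b)`: near `0` the substitution `v = s u` and dominated convergence
give `Γ(b)`, while away from `0` the integral is `O(e^(-δ s))`. -/

open Set Topology ProbabilityTheory

lemma integrableOn_rpow_mul_one_sub_rpow {a b : ℝ} (ha : 0 < a) (hb : 0 < b) :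
    IntegrableOn (fun x : ℝ => x ^ (a - 1) * (1 - x) ^ (b - 1)) (Ioo 0 1) := by
  have hpdf : Integrable (betaPDFReal a b) := by
    refine ⟨(measurable_betaPDFReal a b).aestronglyMeasurable, ?_⟩
    rw [hasFiniteIntegral_iff_ofReal]
    · simp [← betaPDF.eq_def, lintegral_betaPDF_eq_one ha hb]
    · exact ae_of_all _ fun x => by
        unfold betaPDFReal; split_ifs with h
        · exact (betaPDFReal_pos h.1 h.2 ha hb).le.trans_eq (if_pos h)
        · exact le_rfl
  refine IntegrableOn.congr_fun (hpdf.integrableOn.const_mul (beta a b))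
    (fun x hx => ?_) measurableSet_Ioo
  rw [betaPDFReal, if_pos (show 0 < x ∧ x < 1 from hx)]
  field_simp [(beta_pos ha hb).ne']

lemma rpow_mul_integral_Ioc_mul_exp_neg_mul (g : ℝ → ℝ) (b : ℝ) {s δ : ℝ} (hs : 0 < s)
    (hδ : 0 ≤ δ) :
    s ^ b * ∫ u in Ioc 0 δ, g u * u ^ (b - 1) * exp (-(s * u)) =
      ∫ v in Ioc 0 (s * δ), g (v / s) * v ^ (b - 1) * exp (-v) := by
  rw [← intervalIntegral.integral_of_le hδ, ← intervalIntegral.integral_of_le (by positivity)]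
  have hsub := intervalIntegral.integral_comp_mul_left (a := 0) (b := δ)
    (fun v => g (v / s) * v ^ (b - 1) * exp (-v)) hs.ne'
  rw [mul_zero, smul_eq_mul] at hsub
  have hscale : ∀ u ∈ uIcc 0 δ, g (s * u / s) * (s * u) ^ (b - 1) * exp (-(s * u)) =
      s ^ (b - 1) * (g u * u ^ (b - 1) * exp (-(s * u))) := by
    intro u hu
    rw [uIcc_of_le hδ] at hu
    rw [mul_div_cancel_left₀ u hs.ne', mul_rpow hs.le hu.1]
    ring
  rw [intervalIntegral.integral_congr hscale, intervalIntegral.integral_const_mul] at hsub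
  calc _ = s * (s ^ (b - 1) * ∫ u in (0)..δ, g u * u ^ (b - 1) * exp (-(s * u))) := by
        rw [rpow_sub_one hs.ne']; field_simp
    _ = _ := by rw [hsub]; field_simp

lemma tendsto_rpow_mul_integral_Ioc_mul_exp_neg_mul {g : ℝ → ℝ} (hgm : Measurable g)
    (hg : ContinuousWithinAt g (Ioi 0) 0) {δ M : ℝ} (hδ : 0 < δ)
    (hM : ∀ u ∈ Ioc 0 δ, ‖g u‖ ≤ M) {b : ℝ} (hb : 0 < b) :
    Tendsto (fun s => s ^ b * ∫ u in Ioc 0 δ, g u * u ^ (b - 1) * exp (-(s * u))) atTop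
      (𝓝 (g 0 * Gamma b)) := by
  set F : ℝ → ℝ → ℝ := fun s => (Iic (s * δ)).indicator
    fun v => g (v / s) * v ^ (b - 1) * exp (-v)
  have hF : ∀ s > 0, s ^ b * ∫ u in Ioc 0 δ, g u * u ^ (b - 1) * exp (-(s * u)) =
      ∫ v in Ioi 0, F s v := by
    intro s hs
    rw [rpow_mul_integral_Ioc_mul_exp_neg_mul g b hs hδ.le,
      setIntegral_indicator measurableSet_Iic, Ioi_inter_Iic]
  have hlim : g 0 * Gamma b = ∫ v in Ioi 0, g 0 * v ^ (b - 1) * exp (-v) := by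
    simp_rw [Gamma_eq_integral hb, mul_assoc, ← integral_const_mul, mul_comm (exp _)]
  rw [hlim]
  refine Tendsto.congr' (f₁ := fun s => ∫ v in Ioi 0, F s v) ?_ ?_
  · filter_upwards [eventually_gt_atTop 0] with s hs using (hF s hs).symm
  refine tendsto_integral_filter_of_dominated_convergence
    (fun v => M * (exp (-v) * v ^ (b - 1))) ?_ ?_ ((GammaIntegral_convergent hb).const_mul M) ?_
  · exact Eventually.of_forall fun s => (Measurable.indicator (by fun_prop)
      measurableSet_Iic).aestronglyMeasurable
  · filter_upwards [eventually_gt_atTop 0] with s hs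
    filter_upwards [ae_restrict_mem measurableSet_Ioi] with v hv
    by_cases hvs : v ≤ s * δ
    · have hgv : ‖g (v / s)‖ ≤ M :=
        hM _ ⟨div_pos hv hs, (div_le_iff₀' hs).2 hvs⟩
      simp only [F, indicator_of_mem (mem_Iic.2 hvs), norm_mul,
        norm_of_nonneg (rpow_nonneg hv.le _), norm_of_nonneg (exp_nonneg _)]
      rw [mul_comm (exp _), ← mul_assoc]
      have := rpow_nonneg hv.le (b - 1)
      gcongr
    · simp only [F, indicator_of_notMem (fun h => hvs (mem_Iic.1 h)), norm_zero]
      have := (norm_nonneg _).trans (hM δ ⟨hδ, le_rfl⟩)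
      have := rpow_nonneg hv.le (b - 1)
      positivity
  · filter_upwards [ae_restrict_mem measurableSet_Ioi] with v hv
    have hv_scaled : Tendsto (fun s => v / s) atTop (𝓝[>] 0) :=
      tendsto_nhdsWithin_iff.2 ⟨tendsto_const_nhds.div_atTop tendsto_id,
        (eventually_gt_atTop 0).mono fun s hs => div_pos hv hs⟩
    refine Tendsto.congr' ?_ (((hg.tendsto.comp hv_scaled).mul_const (v ^ (b - 1))).mul_const
      (exp (-v)))
    filter_upwards [eventually_ge_atTop (v / δ)] with s hs
    simp only [F, Function.comp, indicator_of_mem (mem_Iic.2 ((div_le_iff₀ hδ).1 hs))]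

lemma tendsto_rpow_mul_setIntegral_mul_exp_neg_mul {F : ℝ → ℝ} {S : Set ℝ} {δ : ℝ}
    (hδ : 0 < δ) (hSm : MeasurableSet S) (hS : S ⊆ Ici δ) (hF : IntegrableOn F S) (b : ℝ) :
    Tendsto (fun s => s ^ b * ∫ u in S, F u * exp (-(s * u))) atTop (𝓝 0) := by
  have hbound : ∀ s ≥ 0,
      ‖∫ u in S, F u * exp (-(s * u))‖ ≤ (∫ u in S, ‖F u‖) * exp (-δ * s) := by
    intro s hs
    rw [← integral_mul_const]
    refine norm_integral_le_of_norm_le (hF.norm.mul_const _) ?_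
    filter_upwards [ae_restrict_mem hSm] with u hu
    rw [norm_mul, norm_of_nonneg (exp_nonneg _)]
    gcongr
    nlinarith [mem_Ici.1 (hS hu)]
  refine squeeze_zero_norm' (a := fun s => s ^ b * exp (-δ * s) * ∫ u in S, ‖F u‖) ?_ ?_
  · filter_upwards [eventually_ge_atTop 0] with s hs
    rw [norm_mul, norm_of_nonneg (rpow_nonneg hs b)]
    calc _ ≤ s ^ b * ((∫ u in S, ‖F u‖) * exp (-δ * s)) := by gcongr; exact hbound s hs
      _ = _ := by ring
  · simpa using
      (tendsto_rpow_mul_exp_neg_mul_atTop_nhds_zero b δ hδ).mul_const (∫ u in S, ‖F u‖)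

theorem tendsto_rpow_mul_integral_mul_exp_neg_mul {g : ℝ → ℝ} (hgm : Measurable g)
    (hg : ContinuousWithinAt g (Ioi 0) 0) {b : ℝ} (hb : 0 < b)
    (hint : IntegrableOn (fun u => g u * u ^ (b - 1)) (Ioo 0 1)) :
    Tendsto (fun s => s ^ b * ∫ u in Ioo 0 1, g u * u ^ (b - 1) * exp (-(s * u))) atTop
      (𝓝 (g 0 * Gamma b)) := by
  -- `g` is bounded near `0`, which makes the rescaled integrands dominated there.
  obtain ⟨δ, hδ, hδ1, hM⟩ : ∃ δ, 0 < δ ∧ δ < 1 ∧ ∀ u ∈ Ioc 0 δ, ‖g u‖ ≤ ‖g 0‖ + 1 := by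
    obtain ⟨ε, hε, hsub⟩ := mem_nhdsGT_iff_exists_Ioc_subset.1
      (hg.norm.eventually (gt_mem_nhds (lt_add_one ‖g 0‖)))
    refine ⟨min ε (1 / 2), lt_min hε (by norm_num), by linarith [min_le_right ε (1 / 2)],
      fun u hu => (hsub (Ioc_subset_Ioc_right (min_le_left _ _) hu)).le⟩
  have hsplit : ∀ s ≥ 0, ∫ u in Ioo 0 1, g u * u ^ (b - 1) * exp (-(s * u)) =
      (∫ u in Ioc 0 δ, g u * u ^ (b - 1) * exp (-(s * u))) +
        ∫ u in Ioo δ 1, g u * u ^ (b - 1) * exp (-(s * u)) := by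
    intro s hs
    have hint_s : IntegrableOn (fun u => g u * u ^ (b - 1) * exp (-(s * u))) (Ioo 0 1) := by
      refine hint.mul_bdd (c := 1) (by fun_prop) ?_
      filter_upwards [ae_restrict_mem measurableSet_Ioo] with u hu
      rw [norm_of_nonneg (exp_nonneg _), exp_le_one_iff]
      nlinarith [hu.1]
    rw [← Ioc_union_Ioo_eq_Ioo hδ.le hδ1] at hint_s ⊢
    exact setIntegral_union (Ioc_disjoint_Ioi_same.mono_right Ioo_subset_Ioi_self)
      measurableSet_Ioo (hint_s.mono_set subset_union_left) (hint_s.mono_set subset_union_right)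
  have hfar := tendsto_rpow_mul_setIntegral_mul_exp_neg_mul hδ measurableSet_Ioo
    (Ioo_subset_Ioi_self.trans Ioi_subset_Ici_self)
    (hint.mono_set (Ioo_subset_Ioo_left hδ.le)) b
  rw [← add_zero (g 0 * Gamma b)]
  refine ((tendsto_rpow_mul_integral_Ioc_mul_exp_neg_mul hgm hg hδ hM hb).add hfar).congr' ?_
  filter_upwards [eventually_ge_atTop 0] with s hs
  rw [hsplit s hs, mul_add]

instance : SFinite expM := by unfold expM; infer_instance

lemma expM_Ioi {t : ℝ} (ht : 0 ≤ t) : expM (Ioi t) = ENNReal.ofReal (exp (-t)) := by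
  rw [expM, withDensity_apply _ measurableSet_Ioi,
    setLIntegral_congr_fun measurableSet_Ioi
      fun y (hy : t < y) => by rw [if_pos (ht.trans_lt hy)],
    ← integral_exp_neg_Ioi]
  have hint : IntegrableOn (fun y => exp (-y)) (Ioi t) := by
    simpa using exp_neg_integrableOn_Ioi t one_pos
  exact (ofReal_integral_eq_lintegral_ofReal hint
    (ae_of_all _ fun y => exp_nonneg _)).symm

lemma betaM_eq_withDensity (a b : ℝ) :
    betaM a b = (volume.restrict (Ioo 0 1)).withDensity fun x => ENNReal.ofReal
      (x ^ (a - 1) * (1 - x) ^ (b - 1) * (Gamma (a + b) / (Gamma a * Gamma b))) := by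
  rw [betaM, ← withDensity_indicator measurableSet_Ioo]
  congr 1 with x
  by_cases hx : x ∈ Ioo 0 1
  · rw [indicator_of_mem hx, if_pos (show 0 < x ∧ x < 1 from hx)]
  · rw [indicator_of_notMem hx, if_neg (show ¬(0 < x ∧ x < 1) from hx), ENNReal.ofReal_zero]

lemma integral_Ioo_zero_one_comp_one_sub (f : ℝ → ℝ) :
    ∫ x in Ioo 0 1, f (1 - x) = ∫ x in Ioo 0 1, f x := by
  simp_rw [← integral_Ioc_eq_integral_Ioo, ← intervalIntegral.integral_of_le zero_le_one]
  simp [intervalIntegral.integral_comp_sub_left f (1 : ℝ) (a := 0) (b := 1)]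

lemma toReal_betaM_prod_expM_lt {a b s : ℝ} (ha : 0 < a) (hb : 0 < b) (hs : 0 < s) :
    ((betaM a b).prod expM {q : ℝ × ℝ | 1 - q.1 < q.2 / s}).toReal =
      Gamma (a + b) / (Gamma a * Gamma b) *
        ∫ u in Ioo 0 1, (1 - u) ^ (a - 1) * u ^ (b - 1) * exp (-(s * u)) := by
  have hC : 0 ≤ Gamma (a + b) / (Gamma a * Gamma b) :=
    (div_pos (Gamma_pos_of_pos (add_pos ha hb))
      (mul_pos (Gamma_pos_of_pos ha) (Gamma_pos_of_pos hb))).le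
  have hS : MeasurableSet {q : ℝ × ℝ | 1 - q.1 < q.2 / s} :=
    measurableSet_lt (by fun_prop) (by fun_prop)
  have hdensity : ∀ x ∈ Ioo (0 : ℝ) 1,
      0 ≤ x ^ (a - 1) * (1 - x) ^ (b - 1) * (Gamma (a + b) / (Gamma a * Gamma b)) := fun x hx =>
    mul_nonneg (mul_nonneg (rpow_nonneg hx.1.le _) (rpow_nonneg (by linarith [hx.2]) _)) hC
  have hsection : ∀ x ∈ Ioo (0 : ℝ) 1,
      ENNReal.ofReal (x ^ (a - 1) * (1 - x) ^ (b - 1) * (Gamma (a + b) / (Gamma a * Gamma b))) *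
        expM (Prod.mk x ⁻¹' {q : ℝ × ℝ | 1 - q.1 < q.2 / s}) =
      ENNReal.ofReal (Gamma (a + b) / (Gamma a * Gamma b) *
        ((1 - (1 - x)) ^ (a - 1) * (1 - x) ^ (b - 1) * exp (-(s * (1 - x))))) := by
    intro x hx
    have hpre : Prod.mk x ⁻¹' {q : ℝ × ℝ | 1 - q.1 < q.2 / s} = Ioi (s * (1 - x)) := by
      ext y; simp [lt_div_iff₀ hs, mul_comm]
    rw [hpre, expM_Ioi (mul_nonneg hs.le (by linarith [hx.2])),
      ← ENNReal.ofReal_mul (hdensity x hx), sub_sub_cancel]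
    ring_nf
  rw [Measure.prod_apply hS, betaM_eq_withDensity,
    lintegral_withDensity_eq_lintegral_mul _ (by fun_prop) (measurable_measure_prodMk_left hS)]
  simp only [Pi.mul_apply]
  rw [setLIntegral_congr_fun measurableSet_Ioo hsection, ← integral_eq_lintegral_of_nonneg_ae,
    integral_const_mul, integral_Ioo_zero_one_comp_one_sub
      (fun u => (1 - u) ^ (a - 1) * u ^ (b - 1) * exp (-(s * u)))]
  · filter_upwards [ae_restrict_mem measurableSet_Ioo] with x hx
    rw [sub_sub_cancel]
    exact mul_nonneg hC (mul_nonneg (mul_nonneg (rpow_nonneg hx.1.le _)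
      (rpow_nonneg (by linarith [hx.2]) _)) (exp_nonneg _))
  · fun_prop

theorem beta_exp_tail (a b p : ℝ) (ha : 0 < a) (hb : 0 < b) (hp : 0 < p) :
    Tendsto (fun w : ℝ =>
        (((betaM a b).prod expM) {q : ℝ × ℝ | 1 - q.1 < q.2 / (p * w)}).toReal /
          (Real.Gamma b / (Real.Gamma a * Real.Gamma b / Real.Gamma (a + b)) * (p * w) ^ (-b)))
      atTop (nhds 1) := by
  have hg : ContinuousWithinAt (fun u : ℝ => (1 - u) ^ (a - 1)) (Ioi 0) 0 :=
    ((continuous_const.sub continuous_id).continuousAt.rpow_const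
      (Or.inl (by norm_num))).continuousWithinAt
  have hint : IntegrableOn (fun u : ℝ => (1 - u) ^ (a - 1) * u ^ (b - 1)) (Ioo 0 1) :=
    (integrableOn_rpow_mul_one_sub_rpow hb ha).congr_fun (fun u _ => mul_comm _ _)
      measurableSet_Ioo
  have hlim := ((tendsto_rpow_mul_integral_mul_exp_neg_mul (by fun_prop) hg hb hint).comp
    (tendsto_id.const_mul_atTop hp)).div_const (Gamma b)
  rw [sub_zero, one_rpow, one_mul, div_self (Gamma_pos_of_pos hb).ne'] at hlim
  refine hlim.congr' ?_
  filter_upwards [eventually_gt_atTop 0] with w hw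
  rw [Function.comp_apply, id, toReal_betaM_prod_expM_lt ha hb (mul_pos hp hw),
    rpow_neg (mul_pos hp hw).le]
  generalize ∫ u in Ioo 0 1, (1 - u) ^ (a - 1) * u ^ (b - 1) * exp (-(p * w * u)) = I
  field_simp
end

section
/- For all x > 0 and p > 0, 1 − x/p ≤ (1 + x)^{-1/p} < 1 − x/p + ((p+1)/(2p²)) x². -/
/-! Write `r = 1 / p`. The lower bound is Bernoulli's inequality for the negative exponent `-r`,
obtained from `1 + y ≤ exp y` and `log (1 + x) ≤ x`. For the upper bound, let `q` be the
second-order Taylor polynomial of `(1 + t) ^ (-r)` at `0`; then `q t * (1 + t) ^ r` equals `1` at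
`t = 0` and has derivative `r (r + 1) (r + 2) / 2 · t ^ 2 (1 + t) ^ (r - 1) > 0` for `t > 0`. -/

open Real Set

namespace Real

theorem one_sub_mul_le_one_add_rpow_neg {r x : ℝ} (hr : 0 ≤ r) (hx : -1 < x) :
    1 - r * x ≤ (1 + x) ^ (-r) := by
  have h1x : 0 < 1 + x := by linarith
  have hlog : log (1 + x) ≤ x := by linarith [log_le_sub_one_of_pos h1x]
  calc 1 - r * x ≤ 1 + log (1 + x) * -r := by nlinarith
    _ ≤ exp (log (1 + x) * -r) := add_one_le_exp _ |>.trans' (by linarith)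
    _ = (1 + x) ^ (-r) := (rpow_def_of_pos h1x _).symm

theorem hasDerivAt_taylor_two_mul_one_add_rpow (r : ℝ) {t : ℝ} (ht : -1 < t) :
    HasDerivAt (fun t => (1 - r * t + r * (r + 1) / 2 * t ^ 2) * (1 + t) ^ r)
      (r * (r + 1) * (r + 2) / 2 * t ^ 2 * (1 + t) ^ (r - 1)) t := by
  have h1t : 0 < 1 + t := by linarith
  have hquad : HasDerivAt (fun t => 1 - r * t + r * (r + 1) / 2 * t ^ 2)
      (-r + r * (r + 1) * t) t := by
    refine ((((hasDerivAt_id t).const_mul r).const_sub 1).add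
      ((hasDerivAt_pow 2 t).const_mul (r * (r + 1) / 2))).congr_deriv ?_
    simp only [Nat.cast_ofNat]
    ring
  have hpow : HasDerivAt (fun t => (1 + t) ^ r) (r * (1 + t) ^ (r - 1)) t := by
    simpa using ((hasDerivAt_id t).const_add 1).rpow_const (p := r) (Or.inl h1t.ne')
  have hsplit : (1 + t) ^ r = (1 + t) ^ (r - 1) * (1 + t) := by
    rw [← rpow_add_one h1t.ne', sub_add_cancel]
  refine (hquad.mul hpow).congr_deriv ?_
  rw [hsplit]
  ring

theorem one_lt_taylor_two_mul_one_add_rpow {r x : ℝ} (hr : 0 < r) (hx : 0 < x) :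
    1 < (1 - r * x + r * (r + 1) / 2 * x ^ 2) * (1 + x) ^ r := by
  have hderiv (t : ℝ) (ht : 0 ≤ t) :=
    hasDerivAt_taylor_two_mul_one_add_rpow r (t := t) (by linarith)
  have hmono : StrictMonoOn (fun t => (1 - r * t + r * (r + 1) / 2 * t ^ 2) * (1 + t) ^ r)
      (Ici 0) := by
    refine strictMonoOn_of_hasDerivWithinAt_pos (convex_Ici 0)
      (fun t ht => (hderiv t ht).continuousAt.continuousWithinAt)
      (fun t ht => (hderiv t (interior_subset ht)).hasDerivWithinAt) fun t ht => ?_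
    obtain ht : 0 < t := by rwa [interior_Ici] at ht
    have : 0 < 1 + t := by linarith
    positivity
  simpa using hmono self_mem_Ici hx.le hx

theorem one_add_rpow_neg_lt_taylor_two {r x : ℝ} (hr : 0 < r) (hx : 0 < x) :
    (1 + x) ^ (-r) < 1 - r * x + r * (r + 1) / 2 * x ^ 2 := by
  have hpos : 0 < (1 + x) ^ r := rpow_pos_of_pos (by linarith) r
  rw [rpow_neg (by linarith), inv_lt_iff_one_lt_mul₀ hpos]
  exact one_lt_taylor_two_mul_one_add_rpow hr hx

end Real

theorem one_add_rpow_neg_inv_bounds (x p : ℝ) (hx : 0 < x) (hp : 0 < p) :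
    1 - x / p ≤ (1 + x) ^ (-(1 / p)) ∧
      (1 + x) ^ (-(1 / p)) < 1 - x / p + (p + 1) / (2 * p ^ 2) * x ^ 2 := by
  have hlin : x / p = 1 / p * x := by ring
  have hquad : (p + 1) / (2 * p ^ 2) = 1 / p * (1 / p + 1) / 2 := by
    field_simp
    ring
  rw [hlin, hquad]
  exact ⟨one_sub_mul_le_one_add_rpow_neg (by positivity) (by linarith),
    one_add_rpow_neg_lt_taylor_two (by positivity) hx⟩
end

section
/- For every b > 0, p > 0, and all u ∈ (0, 1/(p+1)), (1/b)·(u^b − (u − ((p+1)/2)u²)^b) ≤ ((p+1)(b+1)/(2b)) · u^{b+1}. -/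
theorem rpow_diff_le (b p u : ℝ) (hb : 0 < b) (hp : 0 < p)
    (hu : 0 < u) (hu2 : u < 1 / (p + 1)) :
    (1 / b) * (u ^ b - (u - (p + 1) / 2 * u ^ 2) ^ b) ≤
      (p + 1) * (b + 1) / (2 * b) * u ^ (b + 1) := by
  set t : ℝ := (p + 1) / 2 * u with ht
  have hp1 : (0:ℝ) < p + 1 := by linarith
  have ht0 : 0 < t := by positivity
  have ht1 : t < 1 / 2 := by
    have : u * (p + 1) < 1 := by
      rw [← lt_div_iff₀ hp1] at *; exact hu2
    rw [ht]; nlinarith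
  have hpos : (0:ℝ) < 1 - t := by linarith
  -- key inequality
  have key : 1 - (b + 1) * t ≤ (1 - t) ^ b := by
    rcases le_total b 1 with hb1 | hb1
    · have h1 : (1 - t) ^ (1:ℝ) ≤ (1 - t) ^ b :=
        Real.rpow_le_rpow_of_exponent_ge hpos (by linarith) hb1
      rw [Real.rpow_one] at h1
      nlinarith
    · have h1 : 1 + b * (-t) ≤ (1 + (-t)) ^ b :=
        one_add_mul_self_le_rpow_one_add (by linarith) hb1
      have : 1 + (-t) = 1 - t := by ring
      rw [this] at h1
      nlinarith
  have hv : u - (p + 1) / 2 * u ^ 2 = u * (1 - t) := by rw [ht]; ring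
  have hvb : (u - (p + 1) / 2 * u ^ 2) ^ b = u ^ b * (1 - t) ^ b := by
    rw [hv, Real.mul_rpow hu.le hpos.le]
  rw [hvb, Real.rpow_add hu, Real.rpow_one]
  have hub : (0:ℝ) < u ^ b := Real.rpow_pos_of_pos hu b
  have hA : u ^ b - u ^ b * (1 - t) ^ b ≤ u ^ b * ((b + 1) * t) := by
    nlinarith [mul_le_mul_of_nonneg_left key hub.le]
  have hrhs : (p + 1) * (b + 1) / (2 * b) * (u ^ b * u)
      = (1 / b) * (u ^ b * ((b + 1) * t)) := by
    rw [ht]; field_simp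
  rw [hrhs]
  exact mul_le_mul_of_nonneg_left hA (by positivity)
end

section
/- Let a, b, p > 0, let B be Beta(a,b) and E an independent standard exponential. Then P(B ∈ [1 − E/(pw), 1 − E/(pw) + ((p+1)/(2p²))·E²/w²] and E ≤ pw/(p+1)) = O(w^{-(b+1)}) as w → ∞. -/
open MeasureTheory Filter Real Asymptotics

/-!
Condition on `E = t > 0` and put `s = t / (p w)`. The constraint `t ≤ p w / (p + 1)` means
`(p + 1) s ≤ 1`, and the `B`-section is the interval `[1 - s, 1 - s + (p + 1) s² / 2]`, whose
length is at most `s / 2`. On it `B ≥ p / (p + 1)` and `s / 2 ≤ 1 - B ≤ s`, so the Beta density is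
`O(s^(b-1))` and the section has probability `O(s^(b+1)) = O(t^(b+1) w^(-(b+1)))`. Integrating
against the exponential law only adds the factor `Γ(b + 2)`.
-/

open Set

noncomputable def betaPDF (a b x : ℝ) : ℝ :=
  if 0 < x ∧ x < 1 then
    x ^ (a - 1) * (1 - x) ^ (b - 1) * (Real.Gamma (a + b) / (Real.Gamma a * Real.Gamma b))
  else 0

lemma betaM_eq_withDensity_s12 (a b : ℝ) :
    betaM a b = volume.withDensity fun x => ENNReal.ofReal (betaPDF a b x) := rfl

instance (a b : ℝ) : SFinite (betaM a b) := by unfold betaM; infer_instance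

instance inst_s12 : SFinite expM := by unfold expM; infer_instance

lemma rpow_le_max_of_mem_Icc {x m M : ℝ} (r : ℝ) (hm : 0 < m) (hx : x ∈ Icc m M) :
    x ^ r ≤ max (m ^ r) (M ^ r) := by
  rcases le_total 0 r with hr | hr
  · exact (rpow_le_rpow (hm.le.trans hx.1) hx.2 hr).trans (le_max_right _ _)
  · exact (rpow_le_rpow_of_nonpos hm hx.1 hr).trans (le_max_left _ _)

lemma betaPDF_le_of_mem_Icc {a b x₀ s x : ℝ} (ha : 0 < a) (hb : 0 < b) (hx₀ : 0 < x₀)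
    (hs : 0 < s) (hx₀s : x₀ ≤ 1 - s) (hx : x ∈ Icc (1 - s) (1 - s / 2)) :
    betaPDF a b x ≤ max (x₀ ^ (a - 1)) 1 * (max ((1 / 2) ^ (b - 1)) 1 * s ^ (b - 1)) *
      (Real.Gamma (a + b) / (Real.Gamma a * Real.Gamma b)) := by
  obtain ⟨hx_lo, hx_hi⟩ := hx
  have hx_pos : 0 < x := by linarith
  have hx_lt : x < 1 := by linarith
  rw [betaPDF, if_pos ⟨hx_pos, hx_lt⟩]
  have hA : x ^ (a - 1) ≤ max (x₀ ^ (a - 1)) 1 := by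
    simpa only [one_rpow] using
      rpow_le_max_of_mem_Icc (a - 1) hx₀ ⟨hx₀s.trans hx_lo, hx_lt.le⟩
  have hB : (1 - x) ^ (b - 1) ≤ max ((1 / 2) ^ (b - 1)) 1 * s ^ (b - 1) := by
    calc (1 - x) ^ (b - 1) ≤ max ((s / 2) ^ (b - 1)) (s ^ (b - 1)) :=
          rpow_le_max_of_mem_Icc (b - 1) (half_pos hs) ⟨by linarith, by linarith⟩
      _ = max ((1 / 2) ^ (b - 1) * s ^ (b - 1)) (1 * s ^ (b - 1)) := by
          rw [one_mul, ← mul_rpow (by norm_num) hs.le, one_div_mul_eq_div]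
      _ = max ((1 / 2) ^ (b - 1)) 1 * s ^ (b - 1) :=
          (max_mul_of_nonneg _ _ (by positivity)).symm
  have hG : 0 ≤ Real.Gamma (a + b) / (Real.Gamma a * Real.Gamma b) := by positivity
  exact mul_le_mul_of_nonneg_right
    (mul_le_mul hA hB (rpow_nonneg (by linarith) _) (le_max_of_le_right zero_le_one)) hG

lemma betaM_le_of_betaPDF_le {a b M : ℝ} {S : Set ℝ} (hS : MeasurableSet S)
    (h : ∀ x ∈ S, betaPDF a b x ≤ M) : betaM a b S ≤ ENNReal.ofReal M * volume S := by
  rw [betaM_eq_withDensity_s12, withDensity_apply _ hS, ← setLIntegral_const]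
  exact setLIntegral_mono measurable_const fun x hx => ENNReal.ofReal_le_ofReal (h x hx)

noncomputable def expPDF (t : ℝ) : ℝ := if 0 < t then Real.exp (-t) else 0

lemma expM_eq_withDensity : expM = volume.withDensity fun t => ENNReal.ofReal (expPDF t) := rfl

lemma measurable_expPDF : Measurable expPDF :=
  Measurable.ite measurableSet_Ioi (by fun_prop) measurable_const

lemma ae_expM_pos : ∀ᵐ t ∂expM, 0 < t := by
  rw [expM_eq_withDensity, ae_withDensity_iff measurable_expPDF.ennreal_ofReal]
  refine ae_of_all _ fun t ht => ?_
  by_contra h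
  simp [expPDF, h] at ht

lemma lintegral_expM_rpow {r : ℝ} (hr : -1 < r) :
    ∫⁻ t, ENNReal.ofReal (t ^ r) ∂expM = ENNReal.ofReal (Real.Gamma (r + 1)) := by
  have hGamma : IntegrableOn (fun t : ℝ => Real.exp (-t) * t ^ r) (Ioi 0) := by
    simpa using Real.GammaIntegral_convergent (s := r + 1) (by linarith)
  rw [expM_eq_withDensity, lintegral_withDensity_eq_lintegral_mul _
    measurable_expPDF.ennreal_ofReal (by fun_prop)]
  calc ∫⁻ t, ((fun t => ENNReal.ofReal (expPDF t)) * fun t => ENNReal.ofReal (t ^ r)) t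
      = ∫⁻ t in Ioi 0, ENNReal.ofReal (Real.exp (-t) * t ^ r) := by
        rw [← lintegral_indicator measurableSet_Ioi]
        refine lintegral_congr fun t => ?_
        by_cases ht : 0 < t <;>
          simp [ht, expPDF, indicator, ENNReal.ofReal_mul (Real.exp_nonneg _)]
    _ = ENNReal.ofReal (Real.Gamma (r + 1)) := by
        rw [← ofReal_integral_eq_lintegral_ofReal hGamma, Real.Gamma_eq_integral (by linarith),
          add_sub_cancel_right]
        exact (ae_restrict_iff' measurableSet_Ioi).mpr
          (ae_of_all _ fun t (ht : 0 < t) => by positivity)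

lemma prod_expM_le_of_section_le {ν : Measure ℝ} [SFinite ν] {S : Set (ℝ × ℝ)}
    (hS : MeasurableSet S) {C r : ℝ} (hC : 0 ≤ C) (hr : -1 < r)
    (h : ∀ t, 0 < t → ν ((fun x => (x, t)) ⁻¹' S) ≤ ENNReal.ofReal (C * t ^ r)) :
    (ν.prod expM) S ≤ ENNReal.ofReal (C * Real.Gamma (r + 1)) := by
  rw [Measure.prod_apply_symm hS]
  calc ∫⁻ t, ν ((fun x => (x, t)) ⁻¹' S) ∂expM
      ≤ ∫⁻ t, ENNReal.ofReal C * ENNReal.ofReal (t ^ r) ∂expM := by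
        refine lintegral_mono_ae ?_
        filter_upwards [ae_expM_pos] with t ht
        rw [← ENNReal.ofReal_mul hC]
        exact h t ht
    _ = ENNReal.ofReal (C * Real.Gamma (r + 1)) := by
        rw [lintegral_const_mul _ (by fun_prop), lintegral_expM_rpow hr, ENNReal.ofReal_mul hC]

lemma betaM_section_le {a b p w t : ℝ} (ha : 0 < a) (hb : 0 < b) (hp : 0 < p) (hw : 0 < w)
    (ht : 0 < t) :
    betaM a b {x | (1 - t / (p * w) ≤ x ∧
        x ≤ 1 - t / (p * w) + (p + 1) / (2 * p ^ 2) * t ^ 2 / w ^ 2) ∧ t ≤ p * w / (p + 1)}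
      ≤ ENNReal.ofReal (max ((p / (p + 1)) ^ (a - 1)) 1 * max ((1 / 2) ^ (b - 1)) 1 *
          (Real.Gamma (a + b) / (Real.Gamma a * Real.Gamma b)) * ((p + 1) / 2) *
          (p * w) ^ (-(b + 1)) * t ^ (b + 1)) := by
  by_cases hE : t ≤ p * w / (p + 1)
  swap
  · simp [hE]
  set s := t / (p * w) with hs_def
  have hs : 0 < s := by positivity
  have hs_le : (p + 1) * s ≤ 1 := by
    rw [hs_def, mul_div_assoc', div_le_one (by positivity)]
    rwa [le_div_iff₀ (by positivity), mul_comm] at hE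
  have hlen : (p + 1) / (2 * p ^ 2) * t ^ 2 / w ^ 2 = (p + 1) / 2 * s ^ 2 := by
    rw [hs_def]; field_simp
  have hlen_le : (p + 1) / 2 * s ^ 2 ≤ s / 2 := by nlinarith
  have hx₀s : p / (p + 1) ≤ 1 - s := by
    rw [div_le_iff₀ (by positivity)]; nlinarith
  have hsection : {x | (1 - t / (p * w) ≤ x ∧
        x ≤ 1 - t / (p * w) + (p + 1) / (2 * p ^ 2) * t ^ 2 / w ^ 2) ∧ t ≤ p * w / (p + 1)}
      = Icc (1 - s) (1 - s + (p + 1) / 2 * s ^ 2) := by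
    ext x; simp [hE, hlen, hs_def]
  rw [hsection]
  calc betaM a b (Icc (1 - s) (1 - s + (p + 1) / 2 * s ^ 2))
      ≤ ENNReal.ofReal (max ((p / (p + 1)) ^ (a - 1)) 1 *
            (max ((1 / 2) ^ (b - 1)) 1 * s ^ (b - 1)) *
            (Real.Gamma (a + b) / (Real.Gamma a * Real.Gamma b))) *
          volume (Icc (1 - s) (1 - s + (p + 1) / 2 * s ^ 2)) :=
        betaM_le_of_betaPDF_le measurableSet_Icc fun x hx =>
          betaPDF_le_of_mem_Icc ha hb (by positivity) hs hx₀s ⟨hx.1, by linarith [hx.2]⟩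
    _ = _ := by
        rw [Real.volume_Icc, add_sub_cancel_left, ← ENNReal.ofReal_mul (by positivity)]
        congr 1
        have hpow : s ^ (b - 1) * s ^ 2 = (p * w) ^ (-(b + 1)) * t ^ (b + 1) := by
          rw [← rpow_natCast, ← rpow_add hs, hs_def, div_rpow ht.le (by positivity),
            rpow_neg (by positivity)]
          ring_nf
        rw [mul_assoc _ ((p * w) ^ _), ← hpow]
        ring

theorem beta_exp_interval_prob_bigO (a b p : ℝ) (ha : 0 < a) (hb : 0 < b) (hp : 0 < p) :
    (fun w : ℝ =>
        (((betaM a b).prod expM) {q : ℝ × ℝ |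
            (1 - q.2 / (p * w) ≤ q.1 ∧
              q.1 ≤ 1 - q.2 / (p * w) + (p + 1) / (2 * p ^ 2) * q.2 ^ 2 / w ^ 2) ∧
            q.2 ≤ p * w / (p + 1)}).toReal)
      =O[atTop] fun w : ℝ => w ^ (-(b + 1)) := by
  set K := max ((p / (p + 1)) ^ (a - 1)) 1 * max ((1 / 2) ^ (b - 1)) 1 *
    (Real.Gamma (a + b) / (Real.Gamma a * Real.Gamma b)) * ((p + 1) / 2)
  refine IsBigO.of_bound (K * p ^ (-(b + 1)) * Real.Gamma (b + 2)) ?_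
  filter_upwards [eventually_gt_atTop 0] with w hw
  rw [norm_of_nonneg ENNReal.toReal_nonneg, norm_of_nonneg (by positivity)]
  refine ENNReal.toReal_le_of_le_ofReal (by positivity) ?_
  have hS : MeasurableSet {q : ℝ × ℝ | (1 - q.2 / (p * w) ≤ q.1 ∧
      q.1 ≤ 1 - q.2 / (p * w) + (p + 1) / (2 * p ^ 2) * q.2 ^ 2 / w ^ 2) ∧
      q.2 ≤ p * w / (p + 1)} := by
    simp only [ofPred_and]
    exact ((measurableSet_le (by fun_prop) (by fun_prop)).inter
      (measurableSet_le (by fun_prop) (by fun_prop))).inter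
      (measurableSet_le (by fun_prop) (by fun_prop))
  calc _ ≤ ENNReal.ofReal (K * (p * w) ^ (-(b + 1)) * Real.Gamma (b + 1 + 1)) :=
        prod_expM_le_of_section_le hS (by positivity) (by linarith)
          fun t ht => betaM_section_le ha hb hp hw ht
    _ = _ := by
        rw [mul_rpow hp.le hw.le]
        ring_nf
end

section
/- Let r > 0. Then ∫_0^{√w} |(1 + z/w)^{r-1} − 1| e^{-z} dz ≤ max{1/√w, e^{r/√w} − 1} as a bound, and consequently this integral tends to 0 as w → ∞. -/
/-!
On `(0, √w)` the ratio `x = z / w` lies in `[0, 1/√w]`. For `r ≥ 1` the factor `(1 + x) ^ (r - 1)`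
lies between `1` and `exp ((r - 1) x)`; for `0 < r < 1` it lies between `(1 + x)⁻¹ ≥ 1 - x` and `1`.
So the integrand is at most `max (1/√w) (exp (r/√w) - 1) * exp (-z)`, and `∫₀^∞ exp (-z) = 1`.
Both terms of the maximum tend to `0` as `w → ∞`.
-/

open MeasureTheory Real Filter Set Topology

namespace Real

lemma one_add_rpow_le_exp_mul {x s : ℝ} (hx : -1 ≤ x) (hs : 0 ≤ s) :
    (1 + x) ^ s ≤ exp (s * x) := by
  rw [mul_comm, exp_mul]
  exact rpow_le_rpow (by linarith) (by linarith [add_one_le_exp x]) hs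

lemma one_sub_le_one_add_rpow {x s : ℝ} (hx : 0 ≤ x) (hs : -1 ≤ s) :
    1 - x ≤ (1 + x) ^ s := by
  have hinv : 1 - x ≤ (1 + x)⁻¹ := by
    rw [inv_eq_one_div, le_div_iff₀ (by linarith)]
    nlinarith
  calc 1 - x ≤ (1 + x) ^ (-1 : ℝ) := by rwa [rpow_neg_one]
    _ ≤ (1 + x) ^ s := rpow_le_rpow_of_exponent_le (by linarith) hs

lemma abs_one_add_rpow_sub_one_le {x δ s : ℝ} (hx : 0 ≤ x) (hxδ : x ≤ δ) (hs : -1 ≤ s) :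
    |(1 + x) ^ s - 1| ≤ max δ (exp (s * δ) - 1) := by
  rcases le_total 0 s with hs0 | hs0
  · have hlow : 1 ≤ (1 + x) ^ s := one_le_rpow (by linarith) hs0
    have hup : (1 + x) ^ s ≤ exp (s * δ) :=
      (one_add_rpow_le_exp_mul (by linarith) hs0).trans
        (exp_le_exp.2 (mul_le_mul_of_nonneg_left hxδ hs0))
    rw [abs_of_nonneg (by linarith)]
    exact le_max_of_le_right (by linarith)
  · have hup : (1 + x) ^ s ≤ 1 := rpow_le_one_of_one_le_of_nonpos (by linarith) hs0
    have hlow := one_sub_le_one_add_rpow hx hs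
    rw [abs_of_nonpos (by linarith)]
    exact le_max_of_le_left (by linarith)

end Real

lemma setIntegral_mul_exp_neg_le {s : Set ℝ} (hs : MeasurableSet s) (hs₀ : s ⊆ Ioi 0)
    {g : ℝ → ℝ} {C : ℝ} (hC : 0 ≤ C) (hg₀ : ∀ z ∈ s, 0 ≤ g z) (hgC : ∀ z ∈ s, g z ≤ C) :
    ∫ z in s, g z * exp (-z) ≤ C := by
  have hint : IntegrableOn (fun z => C * exp (-z)) (Ioi 0) := by
    have h := exp_neg_integrableOn_Ioi 0 one_pos
    simp only [neg_mul, one_mul] at h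
    exact h.const_mul C
  calc ∫ z in s, g z * exp (-z) ≤ ∫ z in s, C * exp (-z) := by
        refine integral_mono_of_nonneg ?_ (hint.mono_set hs₀) ?_
        · filter_upwards [ae_restrict_mem hs] with z hz using by positivity [hg₀ z hz]
        · filter_upwards [ae_restrict_mem hs] with z hz
          exact mul_le_mul_of_nonneg_right (hgC z hz) (exp_pos _).le
    _ ≤ ∫ z in Ioi 0, C * exp (-z) :=
        setIntegral_mono_set hint (.of_forall fun z => by positivity) hs₀.eventuallyLE
    _ = C := by rw [integral_const_mul, integral_exp_neg_Ioi_zero, mul_one]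

lemma abs_one_add_div_rpow_sub_one_le {r w z : ℝ} (hr : 0 < r) (hw : 0 < w)
    (hz : z ∈ Ioo 0 √w) :
    |(1 + z / w) ^ (r - 1) - 1| ≤ max (1 / √w) (exp (r / √w) - 1) := by
  have hsw : 0 < √w := sqrt_pos.2 hw
  have hzw : z / w ≤ 1 / √w := by
    rw [div_le_div_iff₀ hw hsw]
    nlinarith [mul_self_sqrt hw.le, hz.2]
  calc |(1 + z / w) ^ (r - 1) - 1| ≤ max (1 / √w) (exp ((r - 1) * (1 / √w)) - 1) :=
        abs_one_add_rpow_sub_one_le (div_nonneg hz.1.le hw.le) hzw (by linarith)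
    _ ≤ max (1 / √w) (exp (r / √w) - 1) := by
        gcongr
        rw [mul_one_div]
        gcongr
        linarith

theorem integral_abs_rpow_sub_one_small (r : ℝ) (hr : 0 < r) :
    (∀ w : ℝ, 0 < w →
      (∫ z in Set.Ioo (0 : ℝ) (Real.sqrt w), |(1 + z / w) ^ (r - 1) - 1| * Real.exp (-z)) ≤
        max (1 / Real.sqrt w) (Real.exp (r / Real.sqrt w) - 1)) ∧
    Tendsto (fun w : ℝ =>
        ∫ z in Set.Ioo (0 : ℝ) (Real.sqrt w), |(1 + z / w) ^ (r - 1) - 1| * Real.exp (-z))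
      atTop (nhds 0) := by
  have bound : ∀ w : ℝ, 0 < w →
      (∫ z in Ioo 0 √w, |(1 + z / w) ^ (r - 1) - 1| * exp (-z)) ≤
        max (1 / √w) (exp (r / √w) - 1) := fun w hw =>
    setIntegral_mul_exp_neg_le measurableSet_Ioo Ioo_subset_Ioi_self
      (le_max_of_le_left (by positivity)) (fun _ _ => abs_nonneg _)
      (fun _ hz => abs_one_add_div_rpow_sub_one_le hr hw hz)
  have hinv : Tendsto (fun w : ℝ => 1 / √w) atTop (𝓝 0) := by
    simpa only [one_div, Function.comp_def] using tendsto_inv_atTop_zero.comp tendsto_sqrt_atTop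
  have hexp : Tendsto (fun w : ℝ => exp (r / √w) - 1) atTop (𝓝 0) := by
    have hdiv : Tendsto (fun w : ℝ => r / √w) atTop (𝓝 0) := by
      simpa only [mul_one_div, mul_zero] using hinv.const_mul r
    simpa only [Function.comp_def, exp_zero, sub_self] using
      ((continuous_exp.tendsto 0).comp hdiv).sub_const 1
  refine ⟨bound, squeeze_zero' ?_ ?_ (by simpa only [max_self] using hinv.max hexp)⟩
  · exact .of_forall fun w => integral_nonneg fun z => by positivity
  · filter_upwards [eventually_gt_atTop 0] with w hw using bound w hw
end
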